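/- For every integer k ≥ 1 and every permutation g of the positive integers, the map ς_k(g) is again a permutation of the positive integers, and for all permutations g, h of the positive integers one has ς_k(g∘h) = ς_{h(k)}(g) ∘ ς_k(h). -/
import Mathlib


/-- The `k`-th cloning map on maps of the positive integers:
`ς_k(g)(m) = g(m)` if `m ≤ k` and `g(m) ≤ g(k)`; `g(m)+1` if `m < k` and `g(m) > g(k)`;
`g(m−1)` if `m > k` and `g(m−1) < g(k)`; `g(m−1)+1` if `m > k` and `g(m−1) ≥ g(k)`. -/
def clone (k : ℕ+) (g : ℕ+ → ℕ+) : ℕ+ → ℕ+ := fun m =>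
  if m ≤ k then (if g m ≤ g k then g m else g m + 1)
  else (if g (m - 1) < g k then g (m - 1) else g (m - 1) + 1)

private lemma pnat_lt_succ (a : ℕ+) : a < a + 1 := by
  rw [← PNat.coe_lt_coe, PNat.add_coe, PNat.one_coe]
  omega

private lemma pnat_succ_sub (a : ℕ+) : a + 1 - 1 = a := by
  apply PNat.coe_injective
  have h1 : (1 : ℕ+) < a + 1 := by
    rw [← PNat.coe_lt_coe, PNat.add_coe, PNat.one_coe]
    have := a.pos
    omega
  rw [PNat.sub_coe, if_pos h1, PNat.add_coe, PNat.one_coe]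
  omega

private lemma pnat_sub_succ {k m : ℕ+} (h : k < m) : m - 1 + 1 = m := by
  apply PNat.coe_injective
  have h1 : (1 : ℕ+) < m := lt_of_le_of_lt k.one_le h
  rw [PNat.add_coe, PNat.sub_coe, if_pos h1, PNat.one_coe]
  rw [← PNat.coe_lt_coe, PNat.one_coe] at h1
  omega

private lemma clone_id (k : ℕ+) : clone k id = id := by
  funext m
  simp only [clone, id_eq]
  by_cases hmk : m ≤ k
  · simp [hmk]
  · push_neg at hmk
    have h1m : (1 : ℕ+) < m := lt_of_le_of_lt k.one_le hmk
    have hm1 : ((m - 1 : ℕ+) : ℕ) = (m : ℕ) - 1 := by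
      rw [PNat.sub_coe, if_pos h1m, PNat.one_coe]
    have h1 : ¬ (m - 1 < k) := by
      rw [← PNat.coe_lt_coe, hm1]
      rw [← PNat.coe_lt_coe] at hmk
      omega
    simp only [if_neg (not_le.mpr hmk), if_neg h1, pnat_sub_succ hmk]

private lemma clone_comp (k : ℕ+) (g h : ℕ+ → ℕ+) (hg : Function.Injective g)
    (hh : Function.Injective h) :
    clone k (g ∘ h) = clone (h k) g ∘ clone k h := by
  funext m
  simp only [clone, Function.comp_apply]
  by_cases hmk : m ≤ k
  · by_cases hhm : h m ≤ h k
    · simp only [if_pos hmk, if_pos hhm]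
    · push_neg at hhm
      have h1 : ¬ (h m + 1 ≤ h k) :=
        fun hle => absurd (lt_of_lt_of_le (pnat_lt_succ (h m)) hle) (not_lt.mpr (le_of_lt hhm))
      simp only [if_pos hmk, if_neg (not_le.mpr hhm), if_neg h1, pnat_succ_sub]
      have hne : g (h m) ≠ g (h k) := fun e => absurd (hg e) (ne_of_gt hhm)
      by_cases hc : g (h m) < g (h k)
      · simp only [if_pos (le_of_lt hc), if_pos hc]
      · simp only [if_neg (fun hle => hc (lt_of_le_of_ne hle hne)), if_neg hc]
  · push_neg at hmk
    by_cases hhm : h (m - 1) < h k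
    · simp only [if_neg (not_le.mpr hmk), if_pos hhm, if_pos (le_of_lt hhm)]
      have hne : g (h (m - 1)) ≠ g (h k) := fun e => absurd (hg e) (ne_of_lt hhm)
      by_cases hc : g (h (m - 1)) < g (h k)
      · simp only [if_pos hc, if_pos (le_of_lt hc)]
      · simp only [if_neg hc, if_neg (fun hle => hc (lt_of_le_of_ne hle hne))]
    · have h1 : ¬ (h (m - 1) + 1 ≤ h k) :=
        fun hle => hhm (lt_of_lt_of_le (pnat_lt_succ _) hle)
      simp only [if_neg (not_le.mpr hmk), if_neg hhm, if_neg h1, pnat_succ_sub]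

/-- for every permutation `g` of `ℕ+`, the clone `ς_k(g)` is again a
permutation, and cloning satisfies the product rule `ς_k(g ∘ h) = ς_{h(k)}(g) ∘ ς_k(h)`. -/
theorem clone_bijective_and_product (k : ℕ+) :
    (∀ g : ℕ+ → ℕ+, Function.Bijective g → Function.Bijective (clone k g)) ∧
    (∀ g h : ℕ+ → ℕ+, Function.Bijective g → Function.Bijective h →
      clone k (g ∘ h) = clone (h k) g ∘ clone k h) := by
  constructor
  · intro g hg
    let e := Equiv.ofBijective g hg
    have hge : ∀ x, g x = e x := fun x => rfl
    have hcomp1 : (⇑e.symm) ∘ g = id := by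
      funext x; simp [hge]
    have hcomp2 : g ∘ (⇑e.symm) = id := by
      funext x
      show g (e.symm x) = x
      rw [hge]
      exact e.apply_symm_apply x
    have hinj : Function.Injective (⇑e.symm) := e.symm.injective
    have left : clone (g k) (⇑e.symm) ∘ clone k g = id := by
      rw [← clone_comp k e.symm g hinj hg.injective, hcomp1, clone_id]
    have right : clone k g ∘ clone (g k) (⇑e.symm) = id := by
      have hk : e.symm (g k) = k := by rw [hge]; exact e.symm_apply_apply k
      have := clone_comp (g k) g (⇑e.symm) hg.injective hinj
      rw [hk, hcomp2, clone_id] at this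
      exact this.symm
    exact Function.bijective_iff_has_inverse.mpr
      ⟨clone (g k) (⇑e.symm), congrFun left, congrFun right⟩
  · intro g h hg hh
    exact clone_comp k g h hg.injective hh.injective
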